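/- arXiv:2405.00194 — 7 statements merged into one kernel-verified Lean document; each statement's English description precedes it below -/
import Mathlib

section
/- The adjacent sorting operators τ_i on S_n satisfy the braid relation: τ_i ∘ τ_{i+1} ∘ τ_i = τ_{i+1} ∘ τ_i ∘ τ_{i+1} for all i = 1,...,n-2. -/
/-- The adjacent sorting operator `τ` on the symmetric group of `Fin n`:
`τ i j χ = (swap i j) * χ` if `χ⁻¹ i < χ⁻¹ j`, and `χ` otherwise. -/
def adjSort {n : ℕ} (i j : Fin n) (χ : Equiv.Perm (Fin n)) : Equiv.Perm (Fin n) :=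
  if χ⁻¹ i < χ⁻¹ j then Equiv.swap i j * χ else χ

/-- The braid relation for swaps: `swap a b * swap b c * swap a b = swap b c * swap a b * swap b c`
(both equal `swap a c`). -/
lemma swapBraid {n : ℕ} (a b c : Fin n) (hab : a ≠ b) (hbc : b ≠ c) (hac : a ≠ c) :
    Equiv.swap a b * Equiv.swap b c * Equiv.swap a b
      = Equiv.swap b c * Equiv.swap a b * Equiv.swap b c := by
  have h1 := Equiv.swap_mul_swap_mul_swap hbc.symm hac.symm
  have h2 := Equiv.swap_mul_swap_mul_swap hab hac
  rw [Equiv.swap_comm b a, Equiv.swap_comm c b] at h1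
  rw [h1, h2, Equiv.swap_comm]

/-- The braid relation for the sorting operators, for arbitrary distinct `a b c`. -/
lemma adjSort_braid_gen {n : ℕ} (a b c : Fin n) (hab : a ≠ b) (hbc : b ≠ c) (hac : a ≠ c) :
    adjSort a b ∘ adjSort b c ∘ adjSort a b = adjSort b c ∘ adjSort a b ∘ adjSort b c := by
  funext χ
  simp only [Function.comp_apply, adjSort]
  split_ifs <;>
      (try simp only [mul_inv_rev, Equiv.swap_inv, Equiv.Perm.mul_apply, Equiv.swap_apply_left,
        Equiv.swap_apply_right, Equiv.swap_apply_of_ne_of_ne hac.symm hbc.symm,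
        Equiv.swap_apply_of_ne_of_ne hab hac] at *) <;>
    first
      | rfl
      | omega
      | (simp only [← mul_assoc]; rw [swapBraid a b c hab hbc hac])

/-- The adjacent sorting operators satisfy the braid relation
`τ_i ∘ τ_{i+1} ∘ τ_i = τ_{i+1} ∘ τ_i ∘ τ_{i+1}`. -/
theorem adjSort_braid (n i : ℕ) (hi : i + 2 < n) :
    adjSort (⟨i, by omega⟩ : Fin n) ⟨i + 1, by omega⟩ ∘
        adjSort ⟨i + 1, by omega⟩ ⟨i + 2, hi⟩ ∘
        adjSort ⟨i, by omega⟩ ⟨i + 1, by omega⟩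
      = adjSort ⟨i + 1, by omega⟩ ⟨i + 2, hi⟩ ∘
          adjSort ⟨i, by omega⟩ ⟨i + 1, by omega⟩ ∘
          adjSort ⟨i + 1, by omega⟩ ⟨i + 2, hi⟩ :=
  adjSort_braid_gen _ _ _ (by simp [Fin.ext_iff]) (by simp [Fin.ext_iff]) (by simp [Fin.ext_iff])
end

section
/- Let f₁, f₂ : ℝ → ℝ be continuous with asymptotic slopes λ₁ < λ₂ (i.e. f_j(x)/x → λ_j as x → ±∞). Define the Pitman transform P f₁(x) = f₁(x) + sup_{z ≤ x}[f₂(z) − f₁(z)] and P f₂(x) = f₂(x) − sup_{z ≤ x}[f₂(z) − f₁(z)]. Then P f₁ + P f₂ = f₁ + f₂, and the asymptotic slopes of P f₁ and P f₂ are λ₂ and λ₁ respectively. -/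
/-- `f` has asymptotic slope `a`: `f x / x → a` as `x → ±∞`. -/
def HasSlope (f : ℝ → ℝ) (a : ℝ) : Prop :=
  Filter.Tendsto (fun x => f x / x) Filter.atTop (nhds a) ∧
  Filter.Tendsto (fun x => f x / x) Filter.atBot (nhds a)

/-- First component of the Pitman transform:
`P f₁ (x) = f₁(x) + sup_{z ≤ x} [f₂(z) − f₁(z)]`. -/
noncomputable def pitman1 (f₁ f₂ : ℝ → ℝ) (x : ℝ) : ℝ :=
  f₁ x + sSup ((fun z => f₂ z - f₁ z) '' Set.Iic x)

/-- Second component of the Pitman transform: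
`P f₂ (x) = f₂(x) − sup_{z ≤ x} [f₂(z) − f₁(z)]`. -/
noncomputable def pitman2 (f₁ f₂ : ℝ → ℝ) (x : ℝ) : ℝ :=
  f₂ x - sSup ((fun z => f₂ z - f₁ z) '' Set.Iic x)


open Filter Set Topology

lemma bdd_aux {g : ℝ → ℝ} (hg : Continuous g) {N : ℝ}
    (hN : ∀ z ≤ N, g z ≤ 0) (x : ℝ) : BddAbove (g '' Set.Iic x) := by
  obtain ⟨C, hC⟩ := ((isCompact_Icc (a := N) (b := x)).image hg).bddAbove
  refine ⟨max C 0, ?_⟩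
  rintro y ⟨z, hz, rfl⟩
  rcases le_or_gt z N with h | h
  · exact le_max_of_le_right (hN z h)
  · exact le_max_of_le_left (hC ⟨z, ⟨h.le, hz⟩, rfl⟩)

lemma sup_slope {g : ℝ → ℝ} (hg : Continuous g) {μ : ℝ} (hμ : 0 < μ)
    (htop : Filter.Tendsto (fun z => g z / z) Filter.atTop (nhds μ))
    (hbot : Filter.Tendsto (fun z => g z / z) Filter.atBot (nhds μ)) :
    Filter.Tendsto (fun x => sSup (g '' Set.Iic x) / x) Filter.atTop (nhds μ) ∧
    Filter.Tendsto (fun x => sSup (g '' Set.Iic x) / x) Filter.atBot (nhds μ) := by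
  -- g is eventually nonpositive at -∞
  have hneg : ∀ᶠ z in atBot, g z ≤ 0 := by
    have h1 : ∀ᶠ z in atBot, μ / 2 < g z / z :=
      hbot.eventually (eventually_gt_nhds (by linarith))
    have h2 : ∀ᶠ z : ℝ in atBot, z < 0 := eventually_lt_atBot 0
    filter_upwards [h1, h2] with z hz1 hz2
    have hz : z ≠ 0 := hz2.ne
    have : g z / z * z < μ / 2 * z := by
      exact mul_lt_mul_of_neg_right hz1 hz2
    rw [div_mul_cancel₀ _ hz] at this
    nlinarith
  obtain ⟨N, hN⟩ := eventually_atBot.mp hneg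
  have bdd : ∀ x : ℝ, BddAbove (g '' Set.Iic x) := bdd_aux hg hN
  have ne : ∀ x : ℝ, (g '' Set.Iic x).Nonempty := fun x => ⟨g x, ⟨x, le_refl x, rfl⟩⟩
  have hmem : ∀ x : ℝ, g x ≤ sSup (g '' Set.Iic x) :=
    fun x => le_csSup (bdd x) ⟨x, le_refl x, rfl⟩
  constructor
  · -- atTop
    rw [Metric.tendsto_nhds]
    intro ε hε
    set δ := min (ε / 2) (μ / 2) with hδdef
    have hδ : 0 < δ := lt_min (by linarith) (by linarith)
    have hδε : δ < ε := lt_of_le_of_lt (min_le_left _ _) (by linarith)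
    have hδμ : δ < μ := lt_of_le_of_lt (min_le_right _ _) (by linarith)
    have := htop.eventually (Metric.ball_mem_nhds μ hδ)
    obtain ⟨M₀, hM₀⟩ := eventually_atTop.mp this
    set M := max M₀ 1 with hMdef
    have hM1 : (1:ℝ) ≤ M := le_max_right _ _
    have hMpos : (0:ℝ) < M := lt_of_lt_of_le one_pos hM1
    have key : ∀ z ≥ M, g z < (μ + δ) * z ∧ (μ - δ) * z < g z := by
      intro z hz
      have hz0 : 0 < z := lt_of_lt_of_le hMpos hz
      have h := hM₀ z (le_trans (le_max_left _ _) hz)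
      rw [Real.dist_eq, abs_lt] at h
      constructor
      · have : g z / z < μ + δ := by linarith
        calc g z = g z / z * z := (div_mul_cancel₀ _ hz0.ne').symm
          _ < (μ + δ) * z := mul_lt_mul_of_pos_right this hz0
      · have : μ - δ < g z / z := by linarith
        calc (μ - δ) * z < g z / z * z := mul_lt_mul_of_pos_right this hz0
          _ = g z := div_mul_cancel₀ _ hz0.ne'
    set C := sSup (g '' Set.Iic M) with hC
    rw [eventually_atTop]
    refine ⟨max M (C / δ + 1), fun x hx => ?_⟩
    have hxM : M ≤ x := le_trans (le_max_left _ _) hx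
    have hxC : C / δ + 1 ≤ x := le_trans (le_max_right _ _) hx
    have hx0 : 0 < x := lt_of_lt_of_le hMpos hxM
    have hCx : C ≤ δ * x := by
      have : C / δ ≤ x := by linarith
      calc C = δ * (C / δ) := by field_simp
        _ ≤ δ * x := mul_le_mul_of_nonneg_left this hδ.le
    have hupper : sSup (g '' Set.Iic x) ≤ (μ + δ) * x := by
      apply csSup_le (ne x)
      rintro y ⟨z, hz, rfl⟩
      rcases le_or_gt z M with h | h
      · have : g z ≤ C := le_csSup (bdd M) ⟨z, h, rfl⟩
        have : C ≤ (μ + δ) * x := le_trans hCx (by nlinarith)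
        linarith [le_csSup (bdd M) (show g z ∈ g '' Set.Iic M from ⟨z, h, rfl⟩)]
      · have h2 := (key z h.le).1
        have : (μ + δ) * z ≤ (μ + δ) * x :=
          mul_le_mul_of_nonneg_left (Set.mem_Iic.mp hz) (by linarith)
        linarith
    have hlower : (μ - δ) * x ≤ sSup (g '' Set.Iic x) :=
      le_trans (key x hxM).2.le (hmem x)
    rw [Real.dist_eq, abs_lt]
    constructor
    · have : μ - δ ≤ sSup (g '' Set.Iic x) / x := (le_div_iff₀ hx0).mpr hlower
      linarith
    · have : sSup (g '' Set.Iic x) / x ≤ μ + δ := (div_le_iff₀ hx0).mpr hupper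
      linarith
  · -- atBot
    rw [Metric.tendsto_nhds]
    intro ε hε
    set δ := min (ε / 2) (μ / 2) with hδdef
    have hδ : 0 < δ := lt_min (by linarith) (by linarith)
    have hδε : δ < ε := lt_of_le_of_lt (min_le_left _ _) (by linarith)
    have hδμ : δ < μ := lt_of_le_of_lt (min_le_right _ _) (by linarith)
    have := hbot.eventually (Metric.ball_mem_nhds μ hδ)
    obtain ⟨M₀, hM₀⟩ := eventually_atBot.mp this
    set M := min M₀ (-1) with hMdef
    have hMneg : M ≤ -1 := min_le_right _ _
    rw [eventually_atBot]
    refine ⟨M, fun x hx => ?_⟩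
    have hx0 : x < 0 := lt_of_le_of_lt (le_trans hx hMneg) (by norm_num)
    have key : ∀ z ≤ x, g z ≤ (μ - δ) * z := by
      intro z hz
      have hz0 : z < 0 := lt_of_le_of_lt hz hx0
      have h := hM₀ z (le_trans (le_trans hz hx) (min_le_left _ _))
      rw [Real.dist_eq, abs_lt] at h
      have : μ - δ < g z / z := by linarith
      calc g z = g z / z * z := (div_mul_cancel₀ _ hz0.ne).symm
        _ ≤ (μ - δ) * z := by nlinarith
    have hupper : sSup (g '' Set.Iic x) ≤ (μ - δ) * x := by
      apply csSup_le (ne x)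
      rintro y ⟨z, hz, rfl⟩
      have h1 := key z (Set.mem_Iic.mp hz)
      have : (μ - δ) * z ≤ (μ - δ) * x :=
        mul_le_mul_of_nonneg_left (Set.mem_Iic.mp hz) (by linarith)
      linarith
    have hlow : g x ≤ sSup (g '' Set.Iic x) := hmem x
    -- divide by x < 0 (flips)
    have h1 : μ - δ ≤ sSup (g '' Set.Iic x) / x := by
      rw [le_div_iff_of_neg hx0]
      linarith
    have h2 : sSup (g '' Set.Iic x) / x ≤ g x / x := by
      rw [div_eq_mul_inv, div_eq_mul_inv]
      exact mul_le_mul_of_nonpos_right hlow (inv_nonpos.mpr hx0.le)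
    have h3 := hM₀ x (le_trans hx (min_le_left _ _))
    rw [Real.dist_eq, abs_lt] at h3
    rw [Real.dist_eq, abs_lt]
    constructor <;> linarith

/-- The Pitman transform preserves the sum `f₁ + f₂` and interchanges the
asymptotic slopes `λ₁ < λ₂`. -/
theorem pitman_sum_and_slopes (f₁ f₂ : ℝ → ℝ) (lam₁ lam₂ : ℝ)
    (hc₁ : Continuous f₁) (hc₂ : Continuous f₂)
    (hs₁ : HasSlope f₁ lam₁) (hs₂ : HasSlope f₂ lam₂) (hlt : lam₁ < lam₂) :
    (∀ x, pitman1 f₁ f₂ x + pitman2 f₁ f₂ x = f₁ x + f₂ x) ∧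
    HasSlope (pitman1 f₁ f₂) lam₂ ∧ HasSlope (pitman2 f₁ f₂) lam₁ := by
  set g : ℝ → ℝ := fun z => f₂ z - f₁ z with hgdef
  have hg : Continuous g := hc₂.sub hc₁
  have hμ : 0 < lam₂ - lam₁ := by linarith
  have htop : Filter.Tendsto (fun z => g z / z) Filter.atTop (nhds (lam₂ - lam₁)) := by
    have := (hs₂.1).sub (hs₁.1)
    simpa [hgdef, sub_div] using this
  have hbot : Filter.Tendsto (fun z => g z / z) Filter.atBot (nhds (lam₂ - lam₁)) := by
    have := (hs₂.2).sub (hs₁.2)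
    simpa [hgdef, sub_div] using this
  obtain ⟨Stop, Sbot⟩ := sup_slope hg hμ htop hbot
  refine ⟨fun x => by unfold pitman1 pitman2; ring, ?_, ?_⟩
  · constructor
    · have h := (hs₁.1).add Stop
      have heq : (fun x => f₁ x / x + sSup (g '' Set.Iic x) / x)
          = fun x => pitman1 f₁ f₂ x / x := by
        funext x; rw [pitman1, add_div]
      rw [heq] at h
      convert h using 2
      ring
    · have h := (hs₁.2).add Sbot
      have heq : (fun x => f₁ x / x + sSup (g '' Set.Iic x) / x)
          = fun x => pitman1 f₁ f₂ x / x := by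
        funext x; rw [pitman1, add_div]
      rw [heq] at h
      convert h using 2
      ring
  · constructor
    · have h := (hs₂.1).sub Stop
      have heq : (fun x => f₂ x / x - sSup (g '' Set.Iic x) / x)
          = fun x => pitman2 f₁ f₂ x / x := by
        funext x; rw [pitman2, sub_div]
      rw [heq] at h
      convert h using 2
      ring
    · have h := (hs₂.2).sub Sbot
      have heq : (fun x => f₂ x / x - sSup (g '' Set.Iic x) / x)
          = fun x => pitman2 f₁ f₂ x / x := by
        funext x; rw [pitman2, sub_div]
      rw [heq] at h
      convert h using 2
      ring
end

section
/- Let f₁, f₂ : ℝ → ℝ be continuous with asymptotic slopes λ₁ < λ₂. Define the Pitman transform P and the co-Pitman transform P̄ by P̄ g₁(x) = g₁(x) + sup_{z ≥ x}[g₂(z) − g₁(z)], P̄ g₂(x) = g₂(x) − sup_{z ≥ x}[g₂(z) − g₁(z)] (applied when slope of g₁ exceeds slope of g₂). Then P̄(P(f₁, f₂)) = (f₁, f₂); i.e., the co-Pitman transform inverts the Pitman transform. -/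
/-- First component of the co-Pitman transform:
`P̄ g₁ (x) = g₁(x) + sup_{z ≥ x} [g₂(z) − g₁(z)]`. -/
noncomputable def coPitman1 (g₁ g₂ : ℝ → ℝ) (x : ℝ) : ℝ :=
  g₁ x + sSup ((fun z => g₂ z - g₁ z) '' Set.Ici x)

/-- Second component of the co-Pitman transform:
`P̄ g₂ (x) = g₂(x) − sup_{z ≥ x} [g₂(z) − g₁(z)]`. -/
noncomputable def coPitman2 (g₁ g₂ : ℝ → ℝ) (x : ℝ) : ℝ :=
  g₂ x - sSup ((fun z => g₂ z - g₁ z) '' Set.Ici x)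

/-!
Write `d = f₂ - f₁` and `S x = sup_{z ≤ x} d z`, which is finite because `d → -∞` at `-∞`.
Then `P f₂ - P f₁ = d - 2 S`, so the theorem reduces to `sup_{t ≥ x} (d t - 2 S t) = - S x`.
For `t ≥ x` we have `d t - 2 S t ≤ - S t ≤ - S x`, and equality holds at the first time `z ≥ x`
at which `d` climbs back to the level `S x`: it exists because `d` is continuous and `d → +∞`
at `+∞` (this is where `λ₁ < λ₂` enters), and `S z = S x` since `d ≤ S x` on `[x, z]`.
-/

open Filter Set

theorem HasSlope.sub {f g : ℝ → ℝ} {a b : ℝ} (hf : HasSlope f a) (hg : HasSlope g b) :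
    HasSlope (fun x => f x - g x) (a - b) := by
  simp only [HasSlope, sub_div]
  exact ⟨hf.1.sub hg.1, hf.2.sub hg.2⟩

theorem HasSlope.tendsto_atTop_atTop {f : ℝ → ℝ} {a : ℝ} (hf : HasSlope f a) (ha : 0 < a) :
    Tendsto f atTop atTop := by
  refine (hf.1.pos_mul_atTop ha tendsto_id).congr' ?_
  filter_upwards [eventually_ne_atTop 0] with x hx
  exact div_mul_cancel₀ _ hx

theorem HasSlope.tendsto_atBot_atBot {f : ℝ → ℝ} {a : ℝ} (hf : HasSlope f a) (ha : 0 < a) :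
    Tendsto f atBot atBot := by
  refine (hf.2.pos_mul_atBot ha tendsto_id).congr' ?_
  filter_upwards [eventually_ne_atBot 0] with x hx
  exact div_mul_cancel₀ _ hx

theorem Continuous.bddAbove_image_Iic_of_tendsto_atBot {α β : Type*}
    [ConditionallyCompleteLinearOrder α] [TopologicalSpace α] [OrderTopology α]
    [LinearOrder β] [TopologicalSpace β] [OrderClosedTopology β] {f : α → β}
    (hf : Continuous f) (hbot : Tendsto f atBot atBot) (x : α) : BddAbove (f '' Iic x) := by
  obtain ⟨N, hN⟩ := eventually_atBot.1 (hbot.eventually (eventually_le_atBot (f x)))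
  have hcover : f '' Iic x ⊆ Iic (f x) ∪ f '' Icc (min N x) x := by
    rintro _ ⟨t, ht, rfl⟩
    rcases le_or_gt t (min N x) with h | h
    · exact Or.inl (hN t (h.trans (min_le_left _ _)))
    · exact Or.inr ⟨t, ⟨h.le, ht⟩, rfl⟩
  have : Nonempty β := ⟨f x⟩
  exact (bddAbove_Iic.union (isCompact_Icc.image hf).bddAbove).mono hcover

theorem Continuous.exists_first_hit {d : ℝ → ℝ} (hd : Continuous d)
    (htop : Tendsto d atTop atTop) {x c : ℝ} (hxc : d x ≤ c) :
    ∃ z, x ≤ z ∧ d z = c ∧ ∀ t ∈ Icc x z, d t ≤ c := by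
  set K := Ici x ∩ d ⁻¹' Ici c
  obtain ⟨T, hT⟩ := eventually_atTop.1 (htop.eventually (eventually_ge_atTop c))
  have hKne : K.Nonempty := ⟨max x T, mem_Ici.2 (le_max_left _ _), hT _ (le_max_right _ _)⟩
  have hKbdd : BddBelow K := ⟨x, fun t ht => ht.1⟩
  obtain ⟨hxz, hcz⟩ : x ≤ sInf K ∧ c ≤ d (sInf K) :=
    (isClosed_Ici.inter (isClosed_Ici.preimage hd)).csInf_mem hKne hKbdd
  have below : ∀ t ∈ Ico x (sInf K), d t ≤ c := fun t ht =>
    le_of_not_ge fun h => (csInf_le hKbdd ⟨ht.1, h⟩).not_gt ht.2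
  have hIcc : Icc x (sInf K) ⊆ {t | d t ≤ c} := by
    rcases hxz.eq_or_lt with h | h
    · rw [← h, Icc_self, singleton_subset_iff]
      exact hxc
    · rw [← closure_Ico h.ne]
      exact closure_minimal below (isClosed_le hd continuous_const)
  exact ⟨sInf K, hxz, le_antisymm (hIcc ⟨hxz, le_rfl⟩) hcz, hIcc⟩

theorem sSup_image_Ici_sub_two_mul_sSup_image_Iic {d : ℝ → ℝ} (hd : Continuous d)
    (htop : Tendsto d atTop atTop) (hbdd : ∀ y, BddAbove (d '' Iic y)) (x : ℝ) :
    sSup ((fun t => d t - 2 * sSup (d '' Iic t)) '' Ici x) = -sSup (d '' Iic x) := by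
  set S : ℝ → ℝ := fun y => sSup (d '' Iic y)
  have le_S {s t : ℝ} (h : s ≤ t) : d s ≤ S t := le_csSup (hbdd t) ⟨s, h, rfl⟩
  have S_mono : Monotone S := fun a b hab =>
    csSup_le_csSup (hbdd b) (nonempty_Iic.image d) (image_mono (Iic_subset_Iic.2 hab))
  obtain ⟨z, hxz, hdz, hle⟩ := hd.exists_first_hit htop (le_S le_rfl : d x ≤ S x)
  have hSz : S z = S x := by
    refine le_antisymm (csSup_le (nonempty_Iic.image d) ?_) (S_mono hxz)
    rintro _ ⟨t, ht, rfl⟩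
    rcases le_total t x with h | h
    exacts [le_S h, hle t ⟨h, ht⟩]
  refine IsGreatest.csSup_eq ⟨⟨z, hxz, ?_⟩, ?_⟩
  · change d z - 2 * S z = -S x
    rw [hdz, hSz]
    ring
  · rintro _ ⟨t, ht, rfl⟩
    have hdt : d t ≤ S t := le_S le_rfl
    have hSt : S x ≤ S t := S_mono ht
    change d t - 2 * S t ≤ -S x
    linarith

theorem pitman2_sub_pitman1 (f₁ f₂ : ℝ → ℝ) (t : ℝ) :
    pitman2 f₁ f₂ t - pitman1 f₁ f₂ t
      = (f₂ t - f₁ t) - 2 * sSup ((fun z => f₂ z - f₁ z) '' Iic t) := by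
  rw [pitman1, pitman2]
  ring

/-- The co-Pitman transform inverts the Pitman transform: `P̄ (P (f₁, f₂)) = (f₁, f₂)`
for continuous `f₁, f₂` with asymptotic slopes `λ₁ < λ₂`. -/
theorem coPitman_pitman_inverse (f₁ f₂ : ℝ → ℝ) (lam₁ lam₂ : ℝ)
    (hc₁ : Continuous f₁) (hc₂ : Continuous f₂)
    (hs₁ : HasSlope f₁ lam₁) (hs₂ : HasSlope f₂ lam₂) (hlt : lam₁ < lam₂) :
    coPitman1 (pitman1 f₁ f₂) (pitman2 f₁ f₂) = f₁ ∧
    coPitman2 (pitman1 f₁ f₂) (pitman2 f₁ f₂) = f₂ := by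
  have hd : Continuous fun z => f₂ z - f₁ z := hc₂.sub hc₁
  have hslope : HasSlope (fun z => f₂ z - f₁ z) (lam₂ - lam₁) := hs₂.sub hs₁
  have hpos : 0 < lam₂ - lam₁ := sub_pos.2 hlt
  have key (x : ℝ) : sSup ((fun t => pitman2 f₁ f₂ t - pitman1 f₁ f₂ t) '' Ici x)
      = -sSup ((fun z => f₂ z - f₁ z) '' Iic x) := by
    simp only [pitman2_sub_pitman1]
    exact sSup_image_Ici_sub_two_mul_sSup_image_Iic hd (hslope.tendsto_atTop_atTop hpos)
      (hd.bddAbove_image_Iic_of_tendsto_atBot (hslope.tendsto_atBot_atBot hpos)) x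
  constructor <;> funext x
  · rw [coPitman1, key, pitman1]
    ring
  · rw [coPitman2, key, pitman2]
    ring
end

section
/- Let f₁, f₂ : ℝ → ℝ be continuous with f₂(z) − f₁(z) → −∞ as z → −∞ and f₂(z) − f₁(z) → +∞ as z → +∞. Define S f(x) = sup_{z ≤ x}[f₂(z) − f₁(z)]. Then for every x there exists z₀ ≥ x with f₂(z₀) − f₁(z₀) = S f(z₀) = S f(x); consequently f₁(x) + S f(x) + sup_{z ≥ x}[f₂(z) − f₁(z) − 2 S f(z)] = f₁(x). -/
/-- The running supremum `S f (x) = sup_{z ≤ x} [f₂(z) − f₁(z)]`. -/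
noncomputable def runningSup (f₁ f₂ : ℝ → ℝ) (x : ℝ) : ℝ :=
  sSup ((fun z => f₂ z - f₁ z) '' Set.Iic x)

/-!
Let `g = f₂ − f₁` and `m = S(x)`. Since `g → +∞`, the closed set `{z ≥ x | g z ≥ m}` is nonempty
and has a least element `z₀`. Below `z₀` we have `g ≤ m`, hence also at `z₀` by continuity, so
`g z₀ = S(z₀) = m`. As `g ≤ S` and `S` is nondecreasing, `g − 2S ≤ −S ≤ −S(x)` on `[x, ∞)`,
with equality at `z₀`; the last supremum is therefore `−S(x)`.
-/

open Set Filter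

section RunningSupremum

variable {α β : Type*} [ConditionallyCompleteLinearOrder α] [ConditionallyCompleteLinearOrder β]
  {g : α → β}

lemma le_csSup_image_Iic {x : α} (hb : BddAbove (g '' Iic x)) : g x ≤ sSup (g '' Iic x) :=
  le_csSup hb (mem_image_of_mem g self_mem_Iic)

lemma monotone_csSup_image_Iic (hb : ∀ x, BddAbove (g '' Iic x)) :
    Monotone fun x => sSup (g '' Iic x) := fun _ y hxy =>
  csSup_le_csSup (hb y) (image_nonempty.2 nonempty_Iic) (image_mono (Iic_subset_Iic.2 hxy))

variable [TopologicalSpace α] [OrderTopology α] [TopologicalSpace β] [OrderTopology β]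

lemma bddAbove_image_Iic_of_tendsto_atBot (hg : Continuous g) (hbot : Tendsto g atBot atBot)
    (x : α) : BddAbove (g '' Iic x) := by
  obtain ⟨a, ha⟩ := eventually_atBot.1 (hbot.eventually (eventually_le_atBot (g x)))
  obtain ⟨M, hM⟩ := (isCompact_Icc (a := a) (b := x)).bddAbove_image hg.continuousOn
  refine ⟨max (g x) M, ?_⟩
  rintro _ ⟨z, hzx, rfl⟩
  rcases le_total z a with hza | haz
  · exact (ha z hza).trans (le_max_left _ _)
  · exact (hM (mem_image_of_mem g ⟨haz, hzx⟩)).trans (le_max_right _ _)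

lemma exists_ge_apply_eq_csSup_image_Iic [DenselyOrdered α] [NoMinOrder α] (hg : Continuous g)
    (hb : ∀ x, BddAbove (g '' Iic x)) (htop : Tendsto g atTop atTop) (x : α) :
    ∃ z₀, x ≤ z₀ ∧ g z₀ = sSup (g '' Iic z₀) ∧ sSup (g '' Iic z₀) = sSup (g '' Iic x) := by
  set m := sSup (g '' Iic x)
  set A := Ici x ∩ g ⁻¹' Ici m
  have hA_bdd : BddBelow A := ⟨x, fun _ hz => hz.1⟩
  obtain ⟨b, hmb, hxb⟩ := ((htop.eventually_ge_atTop m).and (eventually_ge_atTop x)).exists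
  have hz₀ : sInf A ∈ A :=
    (isClosed_Ici.inter (isClosed_Ici.preimage hg)).csInf_mem ⟨b, hxb, hmb⟩ hA_bdd
  set z₀ := sInf A
  have hbelow : Iio z₀ ⊆ g ⁻¹' Iic m := by
    intro z hz
    rcases le_total z x with hzx | hxz
    · exact le_csSup (hb x) (mem_image_of_mem g hzx)
    · exact le_of_not_gt fun hmz => (csInf_le hA_bdd ⟨hxz, hmz.le⟩).not_gt hz
  have hupto : Iic z₀ ⊆ g ⁻¹' Iic m := by
    rw [← closure_Iio]
    exact (isClosed_Iic.preimage hg).closure_subset_iff.2 hbelow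
  have hSz₀ : sSup (g '' Iic z₀) ≤ m :=
    csSup_le (image_nonempty.2 nonempty_Iic) (by rintro _ ⟨z, hz, rfl⟩; exact hupto hz)
  exact ⟨z₀, hz₀.1, le_antisymm (le_csSup_image_Iic (hb z₀)) (hSz₀.trans hz₀.2),
    le_antisymm hSz₀ (monotone_csSup_image_Iic hb hz₀.1)⟩

end RunningSupremum

lemma isGreatest_image_Ici_sub_two_mul {g S : ℝ → ℝ} (hgS : ∀ z, g z ≤ S z) (hS : Monotone S)
    {x z₀ : ℝ} (hxz₀ : x ≤ z₀) (hgz₀ : g z₀ = S z₀) (hSz₀ : S z₀ = S x) :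
    IsGreatest ((fun z => g z - 2 * S z) '' Ici x) (-S x) := by
  refine ⟨⟨z₀, hxz₀, by simp only [hgz₀, hSz₀]; ring⟩, ?_⟩
  rintro _ ⟨z, hxz, rfl⟩
  linarith [hgS z, hS hxz]

/-- For continuous `f₁, f₂` with `f₂ − f₁ → −∞` at `−∞` and `→ +∞` at `+∞`:
for every `x` there is `z₀ ≥ x` where `f₂ − f₁` attains the running supremum and the
running supremum has not increased, and consequently
`f₁(x) + S f(x) + sup_{z ≥ x}[f₂(z) − f₁(z) − 2 S f(z)] = f₁(x)`. -/
theorem runningSup_attained_and_coPitman_identity (f₁ f₂ : ℝ → ℝ)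
    (hc₁ : Continuous f₁) (hc₂ : Continuous f₂)
    (hbot : Filter.Tendsto (fun z => f₂ z - f₁ z) Filter.atBot Filter.atBot)
    (htop : Filter.Tendsto (fun z => f₂ z - f₁ z) Filter.atTop Filter.atTop) :
    ∀ x : ℝ,
      (∃ z₀, x ≤ z₀ ∧ f₂ z₀ - f₁ z₀ = runningSup f₁ f₂ z₀ ∧
        runningSup f₁ f₂ z₀ = runningSup f₁ f₂ x) ∧
      f₁ x + runningSup f₁ f₂ x +
          sSup ((fun z => f₂ z - f₁ z - 2 * runningSup f₁ f₂ z) '' Set.Ici x) = f₁ x := by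
  intro x
  have hg : Continuous fun z => f₂ z - f₁ z := hc₂.sub hc₁
  have hb := bddAbove_image_Iic_of_tendsto_atBot hg hbot
  obtain ⟨z₀, hxz₀, hgz₀, hSz₀⟩ := exists_ge_apply_eq_csSup_image_Iic hg hb htop x
  refine ⟨⟨z₀, hxz₀, hgz₀, hSz₀⟩, ?_⟩
  rw [(isGreatest_image_Ici_sub_two_mul (S := runningSup f₁ f₂) (fun z => le_csSup_image_Iic (hb z))
    (monotone_csSup_image_Iic hb) hxz₀ hgz₀ hSz₀).csSup_eq]
  ring
end

section
/- For n ≥ m in ℤ and x ≤ y in ℝ, with f : ℝ → ℝ^{indexed paths} continuous, the last passage value f[(x,n) → (y,m)] = sup over sequences x = t_n ≤ t_{n-1} ≤ ... ≤ t_{m-1} = y of Σ_{i=m}^{n} [f_i(t_{i-1}) − f_i(t_i)] satisfies the metric composition law: for any ℓ with m < ℓ ≤ n, f[(x,n) → (y,m)] = sup_{z ∈ [x,y]} ( f[(x,n) → (z,ℓ)] + f[(z,ℓ−1) → (y,m)] ). -/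
/-- The multi-line last passage value `f[(x,n) → (y,m)]`: the supremum over monotone
sequences of split points `x = t_n ≤ t_{n-1} ≤ ⋯ ≤ t_{m-1} = y` of
`∑_{i=m}^{n} [f_i(t_{i-1}) − f_i(t_i)]`. -/
noncomputable def lpp (f : ℤ → ℝ → ℝ) (x : ℝ) (n : ℤ) (y : ℝ) (m : ℤ) : ℝ :=
  sSup {v : ℝ | ∃ t : ℤ → ℝ, t n = x ∧ t (m - 1) = y ∧
    (∀ i j : ℤ, m - 1 ≤ i → i ≤ j → j ≤ n → t j ≤ t i) ∧
    (∀ i : ℤ, m - 1 ≤ i → i ≤ n → x ≤ t i ∧ t i ≤ y) ∧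
    v = ∑ i ∈ Finset.Icc m n, (f i (t (i - 1)) - f i (t i))}

namespace LPPAux

/-- The set whose supremum defines `lpp`. -/
def lppSet (f : ℤ → ℝ → ℝ) (x : ℝ) (n : ℤ) (y : ℝ) (m : ℤ) : Set ℝ :=
  {v : ℝ | ∃ t : ℤ → ℝ, t n = x ∧ t (m - 1) = y ∧
    (∀ i j : ℤ, m - 1 ≤ i → i ≤ j → j ≤ n → t j ≤ t i) ∧
    (∀ i : ℤ, m - 1 ≤ i → i ≤ n → x ≤ t i ∧ t i ≤ y) ∧
    v = ∑ i ∈ Finset.Icc m n, (f i (t (i - 1)) - f i (t i))}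

lemma lpp_eq (f : ℤ → ℝ → ℝ) (x : ℝ) (n : ℤ) (y : ℝ) (m : ℤ) :
    lpp f x n y m = sSup (lppSet f x n y m) := rfl

lemma lppSet_nonempty (f : ℤ → ℝ → ℝ) {x y : ℝ} {m n : ℤ} (hmn : m ≤ n) (hxy : x ≤ y) :
    (lppSet f x n y m).Nonempty := by
  refine ⟨_, fun i => if m ≤ i then x else y, ?_, ?_, ?_, ?_, rfl⟩
  · simp [hmn]
  · have h : ¬ m ≤ m - 1 := by omega
    simp [h]
  · intro i j hi hij hjn
    by_cases hj : m ≤ j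
    · by_cases hi' : m ≤ i <;> simp [hj, hi', hxy]
    · have hi' : ¬ m ≤ i := fun h => hj (h.trans hij)
      simp [hj, hi']
  · intro i _ _
    by_cases h : m ≤ i <;> simp [h, hxy, le_refl]

lemma lppSet_bddAbove (f : ℤ → ℝ → ℝ) (hf : ∀ i, Continuous (f i)) (x y : ℝ)
    (m n : ℤ) : BddAbove (lppSet f x n y m) := by
  refine ⟨∑ i ∈ Finset.Icc m n,
    (sSup (f i '' Set.Icc x y) - sInf (f i '' Set.Icc x y)), ?_⟩
  rintro v ⟨t, htn, htm, hmono, hmem, rfl⟩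
  apply Finset.sum_le_sum
  intro i hi
  simp only [Finset.mem_Icc] at hi
  have h1 : t (i - 1) ∈ Set.Icc x y := by
    have := hmem (i - 1) (by omega) (by omega)
    exact ⟨this.1, this.2⟩
  have h2 : t i ∈ Set.Icc x y := by
    have := hmem i (by omega) (by omega)
    exact ⟨this.1, this.2⟩
  have hcomp : IsCompact (f i '' Set.Icc x y) := isCompact_Icc.image (hf i)
  have hA := le_csSup hcomp.bddAbove (Set.mem_image_of_mem (f i) h1)
  have hB := csInf_le hcomp.bddBelow (Set.mem_image_of_mem (f i) h2)
  linarith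

lemma sum_split (g : ℤ → ℝ) {m n ℓ : ℤ} (hmℓ : m < ℓ) (hℓn : ℓ ≤ n) :
    ∑ i ∈ Finset.Icc m n, g i =
      (∑ i ∈ Finset.Icc ℓ n, g i) + ∑ i ∈ Finset.Icc m (ℓ - 1), g i := by
  have h2 : Disjoint (Finset.Icc m (ℓ - 1)) (Finset.Icc ℓ n) := by
    rw [Finset.disjoint_left]
    intro a ha hb
    simp only [Finset.mem_Icc] at ha hb
    omega
  have h1 : Finset.Icc m n = Finset.Icc m (ℓ - 1) ∪ Finset.Icc ℓ n := by
    ext i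
    simp only [Finset.mem_Icc, Finset.mem_union]
    omega
  rw [h1, Finset.sum_union h2, add_comm]

/-- Gluing two paths at the split point. -/
lemma glue (f : ℤ → ℝ → ℝ) {x y z : ℝ} {m n ℓ : ℤ} (hmℓ : m < ℓ) (hℓn : ℓ ≤ n)
    {v₁ v₂ : ℝ} (h1 : v₁ ∈ lppSet f x n z ℓ) (h2 : v₂ ∈ lppSet f z (ℓ - 1) y m) :
    v₁ + v₂ ∈ lppSet f x n y m := by
  obtain ⟨t₁, ht1n, ht1l, hmono1, hmem1, rfl⟩ := h1
  obtain ⟨t₂, ht2l, ht2m, hmono2, hmem2, rfl⟩ := h2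
  have hxz : x ≤ z := by
    have := (hmem1 (ℓ - 1) le_rfl (by omega)).1
    rwa [ht1l] at this
  have hzy : z ≤ y := by
    have := (hmem2 (ℓ - 1) (by omega) le_rfl).2
    rwa [ht2l] at this
  refine ⟨fun i => if ℓ - 1 ≤ i then t₁ i else t₂ i, ?_, ?_, ?_, ?_, ?_⟩
  · have h : ℓ - 1 ≤ n := by omega
    simp [h, ht1n]
  · have h : ¬ ℓ - 1 ≤ m - 1 := by omega
    simp [h, ht2m]
  · intro i j hi hij hj
    by_cases hj' : ℓ - 1 ≤ j
    · by_cases hi' : ℓ - 1 ≤ i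
      · simp only [if_pos hj', if_pos hi']
        exact hmono1 i j hi' hij hj
      · simp only [if_pos hj', if_neg hi']
        have ha : t₁ j ≤ t₁ (ℓ - 1) := hmono1 (ℓ - 1) j le_rfl hj' hj
        have hb : t₂ (ℓ - 1) ≤ t₂ i := hmono2 i (ℓ - 1) hi (by omega) le_rfl
        rw [ht1l, ht2l] at *
        linarith
    · have hi' : ¬ ℓ - 1 ≤ i := by omega
      simp only [if_neg hj', if_neg hi']
      exact hmono2 i j hi hij (by omega)
  · intro i hi hin
    by_cases h : ℓ - 1 ≤ i
    · simp only [if_pos h]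
      exact ⟨(hmem1 i h hin).1, (hmem1 i h hin).2.trans hzy⟩
    · simp only [if_neg h]
      exact ⟨hxz.trans (hmem2 i hi (by omega)).1, (hmem2 i hi (by omega)).2⟩
  · rw [sum_split _ hmℓ hℓn]
    congr 1
    · apply Finset.sum_congr rfl
      intro i hi
      simp only [Finset.mem_Icc] at hi
      have h1 : ℓ - 1 ≤ i - 1 := by omega
      have h2 : ℓ - 1 ≤ i := by omega
      simp [h1, h2]
    · apply Finset.sum_congr rfl
      intro i hi
      simp only [Finset.mem_Icc] at hi
      have h1 : ¬ ℓ - 1 ≤ i - 1 := by omega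
      simp only [if_neg h1]
      by_cases h : i = ℓ - 1
      · subst h
        rw [if_pos le_rfl, ht1l, ht2l]
      · rw [if_neg (show ¬ ℓ - 1 ≤ i by omega)]

lemma add_le_lpp (f : ℤ → ℝ → ℝ) (hf : ∀ i, Continuous (f i))
    {x y z : ℝ} {m n ℓ : ℤ} (hmℓ : m < ℓ) (hℓn : ℓ ≤ n)
    (hxz : x ≤ z) (hzy : z ≤ y) :
    lpp f x n z ℓ + lpp f z (ℓ - 1) y m ≤ lpp f x n y m := by
  rw [lpp_eq, lpp_eq, lpp_eq]
  have hA : (lppSet f x n z ℓ).Nonempty := lppSet_nonempty f hℓn hxz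
  have hB : (lppSet f z (ℓ - 1) y m).Nonempty := lppSet_nonempty f (by omega) hzy
  have hC : BddAbove (lppSet f x n y m) := lppSet_bddAbove f hf x y m n
  have key : ∀ a ∈ lppSet f x n z ℓ, ∀ b ∈ lppSet f z (ℓ - 1) y m,
      a + b ≤ sSup (lppSet f x n y m) := fun a ha b hb =>
    le_csSup hC (glue f hmℓ hℓn ha hb)
  have h1 : sSup (lppSet f x n z ℓ) ≤ sSup (lppSet f x n y m)
      - sSup (lppSet f z (ℓ - 1) y m) := by
    apply csSup_le hA
    intro a ha
    have h2 : sSup (lppSet f z (ℓ - 1) y m) ≤ sSup (lppSet f x n y m) - a := by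
      apply csSup_le hB
      intro b hb
      linarith [key a ha b hb]
    linarith
  linarith

end LPPAux

open LPPAux in
/-- Metric composition law for last passage values: for `m < ℓ ≤ n`,
`f[(x,n) → (y,m)] = sup_{z ∈ [x,y]} ( f[(x,n) → (z,ℓ)] + f[(z,ℓ−1) → (y,m)] )`. -/
theorem lpp_metric_composition (f : ℤ → ℝ → ℝ) (hf : ∀ i, Continuous (f i))
    (x y : ℝ) (hxy : x ≤ y) (m n ℓ : ℤ) (hmn : m ≤ n) (hmℓ : m < ℓ) (hℓn : ℓ ≤ n) :
    lpp f x n y m =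
      sSup ((fun z => lpp f x n z ℓ + lpp f z (ℓ - 1) y m) '' Set.Icc x y) := by
  have himg_ne : ((fun z => lpp f x n z ℓ + lpp f z (ℓ - 1) y m) '' Set.Icc x y).Nonempty :=
    ⟨_, ⟨x, ⟨le_rfl, hxy⟩, rfl⟩⟩
  have himg_bdd : BddAbove ((fun z => lpp f x n z ℓ + lpp f z (ℓ - 1) y m) '' Set.Icc x y) := by
    refine ⟨lpp f x n y m, ?_⟩
    rintro v ⟨z, hz, rfl⟩
    exact add_le_lpp f hf hmℓ hℓn hz.1 hz.2
  apply le_antisymm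
  · rw [lpp_eq]
    apply csSup_le (lppSet_nonempty f hmn hxy)
    rintro v ⟨t, htn, htm, hmono, hmem, rfl⟩
    set z := t (ℓ - 1) with hz
    have hzmem : z ∈ Set.Icc x y := by
      have := hmem (ℓ - 1) (by omega) (by omega)
      exact ⟨this.1, this.2⟩
    have hv1 : (∑ i ∈ Finset.Icc ℓ n, (f i (t (i - 1)) - f i (t i))) ∈ lppSet f x n z ℓ := by
      refine ⟨t, htn, rfl, ?_, ?_, rfl⟩
      · intro i j hi hij hj
        exact hmono i j (by omega) hij hj
      · intro i hi hin
        exact ⟨(hmem i (by omega) hin).1, hmono (ℓ - 1) i (by omega) hi hin⟩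
    have hv2 : (∑ i ∈ Finset.Icc m (ℓ - 1), (f i (t (i - 1)) - f i (t i)))
        ∈ lppSet f z (ℓ - 1) y m := by
      refine ⟨t, rfl, htm, ?_, ?_, rfl⟩
      · intro i j hi hij hj
        exact hmono i j hi hij (by omega)
      · intro i hi hil
        refine ⟨hmono i (ℓ - 1) hi hil (by omega), ?_⟩
        have := hmono (m - 1) i le_rfl hi (by omega)
        rwa [htm] at this
    have hle1 : (∑ i ∈ Finset.Icc ℓ n, (f i (t (i - 1)) - f i (t i))) ≤ lpp f x n z ℓ :=
      le_csSup (lppSet_bddAbove f hf x z ℓ n) hv1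
    have hle2 : (∑ i ∈ Finset.Icc m (ℓ - 1), (f i (t (i - 1)) - f i (t i)))
        ≤ lpp f z (ℓ - 1) y m :=
      le_csSup (lppSet_bddAbove f hf z y m (ℓ - 1)) hv2
    have hmem_img : lpp f x n z ℓ + lpp f z (ℓ - 1) y m ∈
        ((fun z => lpp f x n z ℓ + lpp f z (ℓ - 1) y m) '' Set.Icc x y) :=
      ⟨z, hzmem, rfl⟩
    calc ∑ i ∈ Finset.Icc m n, (f i (t (i - 1)) - f i (t i))
        = (∑ i ∈ Finset.Icc ℓ n, (f i (t (i - 1)) - f i (t i)))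
          + ∑ i ∈ Finset.Icc m (ℓ - 1), (f i (t (i - 1)) - f i (t i)) :=
            sum_split _ hmℓ hℓn
      _ ≤ lpp f x n z ℓ + lpp f z (ℓ - 1) y m := add_le_add hle1 hle2
      _ ≤ _ := le_csSup himg_bdd hmem_img
  · apply csSup_le himg_ne
    rintro v ⟨z, hz, rfl⟩
    exact add_le_lpp f hf hmℓ hℓn hz.1 hz.2
end

section
/- Quadrangle inequality for two-line last passage: let f₁, f₂ : ℝ → ℝ be continuous, and for x ≤ y define L(x,y) := sup_{z ∈ [x,y]} [f₂(z) − f₂(x) + f₁(y) − f₁(z)] (last passage from (x,2) to (y,1)). Then for x ≤ x' and y ≤ y' with x' ≤ y, we have L(x, y') + L(x', y) ≤ L(x, y) + L(x', y'). -/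
/-! Writing `g = f₂ - f₁`, the last passage value is `L(x,y) = sup_{[x,y]} g + f₁ y - f₂ x`
(continuity makes the supremum finite), and the boundary terms cancel in the quadrangle
inequality. What remains is a statement about suprema of `g`: since `[x,y'] = [x,y] ∪ [x',y']`
and `[x',y]` lies in both, `sup_{[x,y']} g = max` and `sup_{[x',y]} g ≤ min` of the suprema over
`[x,y]` and `[x',y']`, and `max + min` is the sum. -/

/-- The two-line last passage value from `(x, 2)` to `(y, 1)`:
`L(x,y) = sup_{z ∈ [x,y]} [f₂(z) − f₂(x) + f₁(y) − f₁(z)]`. -/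
noncomputable def twoLineLPP (f₁ f₂ : ℝ → ℝ) (x y : ℝ) : ℝ :=
  sSup ((fun z => f₂ z - f₂ x + f₁ y - f₁ z) '' Set.Icc x y)

open Set

theorem csSup_union_add_csSup_le {α : Type*} [ConditionallyCompleteLinearOrder α]
    [AddCommMonoid α] [AddLeftMono α] {s t u : Set α} (hs : BddAbove s) (hsne : s.Nonempty)
    (ht : BddAbove t) (htne : t.Nonempty) (hune : u.Nonempty) (hus : u ⊆ s) (hut : u ⊆ t) :
    sSup (s ∪ t) + sSup u ≤ sSup s + sSup t := by
  have hu : sSup u ≤ min (sSup s) (sSup t) :=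
    le_min (csSup_le_csSup hs hune hus) (csSup_le_csSup ht hune hut)
  calc sSup (s ∪ t) + sSup u ≤ max (sSup s) (sSup t) + min (sSup s) (sSup t) := by
        rw [csSup_union hs hsne ht htne]
        exact add_le_add_right hu _
    _ = sSup s + sSup t := by rw [add_comm, min_add_max]

theorem sSup_image_Icc_quadrangle (g : ℝ → ℝ) {x x' y y' : ℝ} (hxx' : x ≤ x') (hx'y : x' ≤ y)
    (hyy' : y ≤ y') (hg : BddAbove (g '' Icc x y')) :
    sSup (g '' Icc x y') + sSup (g '' Icc x' y) ≤ sSup (g '' Icc x y) + sSup (g '' Icc x' y') := by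
  have hunion : Icc x y ∪ Icc x' y' = Icc x y' := by
    rw [Icc_union_Icc' hx'y (hxx'.trans (hx'y.trans hyy')), min_eq_left hxx', max_eq_right hyy']
  rw [← hunion, image_union] at hg ⊢
  exact csSup_union_add_csSup_le (hg.mono subset_union_left)
    ((nonempty_Icc.2 (hxx'.trans hx'y)).image g) (hg.mono subset_union_right)
    ((nonempty_Icc.2 (hx'y.trans hyy')).image g) ((nonempty_Icc.2 hx'y).image g)
    (image_mono (Icc_subset_Icc hxx' le_rfl)) (image_mono (Icc_subset_Icc le_rfl hyy'))

theorem twoLineLPP_eq_sSup_add (f₁ f₂ : ℝ → ℝ) {x y : ℝ} (hxy : x ≤ y)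
    (hbdd : BddAbove ((f₂ - f₁) '' Icc x y)) :
    twoLineLPP f₁ f₂ x y = sSup ((f₂ - f₁) '' Icc x y) + (f₁ y - f₂ x) := by
  have h := (OrderIso.addRight (f₁ y - f₂ x)).map_csSup' ((nonempty_Icc.2 hxy).image _) hbdd
  rw [OrderIso.addRight_apply, image_image] at h
  rw [h, twoLineLPP]
  congr 1
  refine image_congr fun z _ => ?_
  simp only [OrderIso.addRight_apply, Pi.sub_apply]
  ring

/-- Quadrangle inequality for two-line last passage:
for `x ≤ x' ≤ y ≤ y'`, `L(x,y') + L(x',y) ≤ L(x,y) + L(x',y')`. -/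
theorem twoLineLPP_quadrangle (f₁ f₂ : ℝ → ℝ)
    (hc₁ : Continuous f₁) (hc₂ : Continuous f₂)
    (x x' y y' : ℝ) (hxx' : x ≤ x') (hx'y : x' ≤ y) (hyy' : y ≤ y') :
    twoLineLPP f₁ f₂ x y' + twoLineLPP f₁ f₂ x' y ≤
      twoLineLPP f₁ f₂ x y + twoLineLPP f₁ f₂ x' y' := by
  have hbdd (a b : ℝ) : BddAbove ((f₂ - f₁) '' Icc a b) :=
    isCompact_Icc.bddAbove_image (hc₂.sub hc₁).continuousOn
  rw [twoLineLPP_eq_sSup_add f₁ f₂ (hxx'.trans (hx'y.trans hyy')) (hbdd _ _),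
    twoLineLPP_eq_sSup_add f₁ f₂ hx'y (hbdd _ _),
    twoLineLPP_eq_sSup_add f₁ f₂ (hxx'.trans hx'y) (hbdd _ _),
    twoLineLPP_eq_sSup_add f₁ f₂ (hx'y.trans hyy') (hbdd _ _)]
  linarith [sSup_image_Icc_quadrangle (f₂ - f₁) hxx' hx'y hyy' (hbdd x y')]
end

section
/- Let X, Y, Z be random variables in Polish spaces S₁, S₂, S₃ with Borel σ-algebras. Suppose X is independent of the pair (Y, Z), and there is a measurable g : S₁ × S₂ → S₃ with g(X, Y) = Z almost surely. Then there is a measurable g' : S₂ → S₃ with g'(Y) = Z almost surely. -/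
open MeasureTheory

/-- If `X` is independent of the pair `(Y, Z)` and `Z = g(X, Y)` almost surely for a
measurable `g`, then `Z = g'(Y)` almost surely for some measurable `g'`. -/
theorem measurable_function_of_independent
    {Ω : Type*} [MeasurableSpace Ω] (μ : Measure Ω) [IsProbabilityMeasure μ]
    {S₁ : Type*} [MeasurableSpace S₁] [TopologicalSpace S₁] [PolishSpace S₁] [BorelSpace S₁]
    {S₂ : Type*} [MeasurableSpace S₂] [TopologicalSpace S₂] [PolishSpace S₂] [BorelSpace S₂]
    {S₃ : Type*} [MeasurableSpace S₃] [TopologicalSpace S₃] [PolishSpace S₃] [BorelSpace S₃]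
    (X : Ω → S₁) (Y : Ω → S₂) (Z : Ω → S₃)
    (hX : Measurable X) (hY : Measurable Y) (hZ : Measurable Z)
    (hindep : ProbabilityTheory.IndepFun X (fun ω => (Y ω, Z ω)) μ)
    (g : S₁ × S₂ → S₃) (hg : Measurable g)
    (hgXY : ∀ᵐ ω ∂μ, g (X ω, Y ω) = Z ω) :
    ∃ g' : S₂ → S₃, Measurable g' ∧ ∀ᵐ ω ∂μ, g' (Y ω) = Z ω := by
  set κ := μ.map (fun ω => (Y ω, Z ω)) with hκ
  set ν := μ.map X with hν
  have hYZ : Measurable fun ω => (Y ω, Z ω) := hY.prodMk hZ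
  have hmap : μ.map (fun ω => (X ω, (Y ω, Z ω))) = ν.prod κ :=
    (ProbabilityTheory.indepFun_iff_map_prod_eq_prod_map_map hX.aemeasurable
      hYZ.aemeasurable).mp hindep
  haveI : IsProbabilityMeasure ν := Measure.isProbabilityMeasure_map hX.aemeasurable
  haveI : IsProbabilityMeasure κ := Measure.isProbabilityMeasure_map hYZ.aemeasurable
  -- the "good" set where g(x,y) = z
  have hE : MeasurableSet {p : S₁ × (S₂ × S₃) | g (p.1, p.2.1) = p.2.2} := by
    have h1 : Measurable fun p : S₁ × (S₂ × S₃) => g (p.1, p.2.1) :=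
      hg.comp (measurable_fst.prodMk (measurable_fst.comp measurable_snd))
    exact MeasureTheory.StronglyMeasurable.measurableSet_eq_fun
      h1.stronglyMeasurable (measurable_snd.comp measurable_snd).stronglyMeasurable
  have h0 : (ν.prod κ) {p : S₁ × (S₂ × S₃) | g (p.1, p.2.1) = p.2.2}ᶜ = 0 := by
    rw [← hmap, Measure.map_apply (hX.prodMk hYZ) hE.compl]
    have : (fun ω => (X ω, (Y ω, Z ω))) ⁻¹'
        {p : S₁ × (S₂ × S₃) | g (p.1, p.2.1) = p.2.2}ᶜ
        = {ω | g (X ω, Y ω) = Z ω}ᶜ := rfl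
    rw [this]
    exact ae_iff.mp hgXY
  rw [Measure.measure_prod_null hE.compl] at h0
  obtain ⟨x₀, hx₀⟩ := h0.exists
  refine ⟨fun y => g (x₀, y), hg.comp (measurable_const.prodMk measurable_id), ?_⟩
  have hx₀' : κ ({q : S₂ × S₃ | g (x₀, q.1) = q.2}ᶜ) = 0 := hx₀
  have hSmeas : MeasurableSet {q : S₂ × S₃ | g (x₀, q.1) = q.2} := by
    have h1 : Measurable fun q : S₂ × S₃ => g (x₀, q.1) :=
      hg.comp (measurable_const.prodMk measurable_fst)
    exact MeasureTheory.StronglyMeasurable.measurableSet_eq_fun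
      h1.stronglyMeasurable measurable_snd.stronglyMeasurable
  rw [hκ, Measure.map_apply hYZ hSmeas.compl] at hx₀'
  exact ae_iff.mpr hx₀'
end
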